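/- arXiv:1912.13248 — 2 statements merged into one kernel-verified Lean document; each statement's English description precedes it below -/
import Mathlib

section
/- For the one-step binomial Euler scheme X̄ = x + σ_n(x) ξ √τ with ξ a d-dimensional vector of i.i.d. ±1 random variables with probability 1/2 each, and φ : ℝ^d → ℝ Lipschitz with constant L, the quantity Z := (1/τ) E[φ(X̄) σ_n^{-T}(x) ξ √τ] satisfies |Z| ≤ ‖σ_n‖_∞ ‖σ_n^{-T}‖_∞ L d², where |·| denotes the ℓ¹ norm. -/
/-!
Since the signs are centred, `∑_ω (σ⁻ᵀ ξ)_i = 0`, so `φ(x)` may be subtracted from `φ(X̄)` for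
free. After that the Lipschitz bound gives `|φ(X̄) - φ(x)| ≤ L √τ ‖σ‖ d` (as `|ξ|₁ = d`), and
`|σ⁻ᵀ ξ √τ|₁ ≤ √τ ‖σ⁻ᵀ‖ d`; the two factors of `√τ` cancel the `1/τ`.
-/

open Finset

/-- The sign vector `ξ` of the scheme; averaging over all `ω : ι → Bool` is the expectation over
i.i.d. fair signs. -/
def signVector {ι R : Type*} [Ring R] (ω : ι → Bool) : ι → R :=
  fun k => if ω k then 1 else -1

section signVector

variable {ι R : Type*} [Fintype ι]

theorem sum_signVector_apply [DecidableEq ι] [Ring R] (k : ι) :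
    ∑ ω : ι → Bool, (signVector ω k : R) = 0 := by
  rw [← (Equiv.piSplitAt k _).symm.sum_comp, Fintype.sum_prod_type]
  simp [signVector, Equiv.piSplitAt]

theorem sum_mulVec_signVector_apply [DecidableEq ι] {m : Type*} [Ring R] (M : Matrix m ι R)
    (i : m) :
    ∑ ω : ι → Bool, M.mulVec (signVector ω) i = 0 := by
  simp only [Matrix.mulVec, dotProduct]
  rw [Finset.sum_comm]
  simp [← Finset.mul_sum, sum_signVector_apply]

theorem sum_abs_signVector (ω : ι → Bool) :
    ∑ k, |(signVector ω k : ℝ)| = Fintype.card ι := by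
  have h : ∀ k, |(signVector ω k : ℝ)| = 1 := fun k => by
    by_cases hk : ω k <;> simp [signVector, hk]
  simp [h]

theorem sum_abs_mulVec_signVector_le {m : Type*} [Fintype m] (M : Matrix m ι ℝ) {C : ℝ}
    (hM : ∀ v : ι → ℝ, ∑ i, |M.mulVec v i| ≤ C * ∑ i, |v i|) (ω : ι → Bool) :
    ∑ i, |M.mulVec (signVector ω) i| ≤ C * Fintype.card ι :=
  (hM _).trans_eq (by rw [sum_abs_signVector])

end signVector

theorem sum_abs_sum_mul_le_of_centered {Ω ι : Type*} [Fintype Ω] [Fintype ι]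
    (g : Ω → ℝ) (v : Ω → ι → ℝ) (c A B : ℝ) (hv : ∀ i, ∑ ω, v ω i = 0)
    (hg : ∀ ω, |g ω - c| ≤ A) (hvB : ∀ ω, ∑ i, |v ω i| ≤ B) :
    ∑ i, |∑ ω, g ω * v ω i| ≤ Fintype.card Ω * (A * B) := by
  have hcenter : ∀ i, ∑ ω, g ω * v ω i = ∑ ω, (g ω - c) * v ω i := fun i => by
    simp only [sub_mul, Finset.sum_sub_distrib, ← Finset.mul_sum, hv, mul_zero, sub_zero]
  calc ∑ i, |∑ ω, g ω * v ω i|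
      ≤ ∑ i, ∑ ω, |g ω - c| * |v ω i| := by
        gcongr with i
        rw [hcenter]
        simpa only [abs_mul] using Finset.abs_sum_le_sum_abs (fun ω => (g ω - c) * v ω i) univ
    _ = ∑ ω, |g ω - c| * ∑ i, |v ω i| := by
        rw [Finset.sum_comm]
        simp only [Finset.mul_sum]
    _ ≤ ∑ _ω : Ω, A * B := by
        gcongr with ω
        · exact (abs_nonneg _).trans (hg ω)
        · exact hg ω
        · exact hvB ω
    _ = Fintype.card Ω * (A * B) := by simp

/-- ℓ¹-bound on Z = (1/τ) E[φ(X̄) σ_n^{-T}(x) ξ √τ] for the one-step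
binomial Euler scheme X̄ = x + σ_n(x) ξ √τ, ξ having i.i.d. ±1 components
(modelled exactly by averaging over all sign patterns ω : Fin d → Bool). -/
theorem one_step_Z_bound {d : ℕ} (τ L CS CSinv : ℝ) (hτ : 0 < τ) (hL : 0 ≤ L)
    (x : Fin d → ℝ) (S Sinv : Matrix (Fin d) (Fin d) ℝ)
    (hS : ∀ v : Fin d → ℝ, ∑ i, |S.mulVec v i| ≤ CS * ∑ i, |v i|)
    (hSinv : ∀ v : Fin d → ℝ, ∑ i, |Sinv.mulVec v i| ≤ CSinv * ∑ i, |v i|)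
    (φ : (Fin d → ℝ) → ℝ)
    (hφ : ∀ y z : Fin d → ℝ, |φ y - φ z| ≤ L * ∑ i, |y i - z i|) :
    ∑ i, |(1 / τ) *
        ((∑ ω : Fin d → Bool,
            φ (fun j => x j + Real.sqrt τ * S.mulVec (fun k => if ω k then 1 else -1) j) *
              (Sinv.mulVec (fun k => if ω k then 1 else -1) i * Real.sqrt τ)) / 2 ^ d)|
      ≤ CS * CSinv * L * (d : ℝ) ^ 2 := by
  have hsqrt : 0 ≤ Real.sqrt τ := Real.sqrt_nonneg τ
  have hstep : ∀ ω : Fin d → Bool,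
      |φ (fun j => x j + Real.sqrt τ * S.mulVec (signVector ω) j) - φ x|
        ≤ L * (Real.sqrt τ * (CS * d)) := fun ω => by
    refine (hφ _ _).trans ?_
    simp only [add_sub_cancel_left, abs_mul, abs_of_nonneg hsqrt, ← Finset.mul_sum]
    have := sum_abs_mulVec_signVector_le S hS ω
    rw [Fintype.card_fin] at this
    gcongr
  have hcentered : ∀ i, ∑ ω : Fin d → Bool, Sinv.mulVec (signVector ω) i * Real.sqrt τ = 0 :=
    fun i => by rw [← Finset.sum_mul, sum_mulVec_signVector_apply, zero_mul]
  have hgrad : ∀ ω : Fin d → Bool,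
      ∑ i, |Sinv.mulVec (signVector ω) i * Real.sqrt τ| ≤ CSinv * d * Real.sqrt τ := fun ω => by
    simp only [abs_mul, abs_of_nonneg hsqrt, ← Finset.sum_mul]
    have := sum_abs_mulVec_signVector_le Sinv hSinv ω
    rw [Fintype.card_fin] at this
    gcongr
  have key := sum_abs_sum_mul_le_of_centered _ _ (φ x) _ _ hcentered hstep hgrad
  rw [Fintype.card_fun, Fintype.card_bool, Fintype.card_fin, Nat.cast_pow, Nat.cast_two] at key
  calc _ = 1 / (τ * 2 ^ d) * ∑ i, |∑ ω : Fin d → Bool,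
            φ (fun j => x j + Real.sqrt τ * S.mulVec (signVector ω) j) *
              (Sinv.mulVec (signVector ω) i * Real.sqrt τ)| := by
        unfold signVector
        simp only [Finset.mul_sum, abs_mul, abs_div, abs_of_pos hτ, abs_one, abs_pow, abs_two]
        field_simp
    _ ≤ 1 / (τ * 2 ^ d) * (2 ^ d * (L * (Real.sqrt τ * (CS * d)) *
            (CSinv * d * Real.sqrt τ))) := by gcongr
    _ = CS * CSinv * L * (d : ℝ) ^ 2 := by
        field_simp
        rw [Real.sq_sqrt hτ.le]
        ring
end

section
/- Monotonicity of the one-step scheme: if φ_1, φ_2 : ℝ^d → ℝ are uniformly Lipschitz with 0 ≤ φ_1 − φ_2 ≤ C, then for the binomial one-step Euler scheme X̄ = x + σ_n(x)ξ√τ: E[φ_1(X̄)] + τ H(t_n, x, (1/τ)E[φ_1(X̄)σ_n^{-T}(x)ξ√τ], p) ≥ E[φ_2(X̄)] + τ H(t_n, x, (1/τ)E[φ_2(X̄)σ_n^{-T}(x)ξ√τ], p) − C' τ √τ, where C' depends only on the data. -/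
open Finset

/-- The binomial random-walk increment associated with a sign pattern. -/
noncomputable def rwInc {d : ℕ} (ω : Fin d → Bool) : Fin d → ℝ :=
  fun k => if ω k then 1 else -1

/-- Expectation w.r.t. the uniform distribution on sign patterns (i.i.d. ±1). -/
noncomputable def Emean {d : ℕ} (f : (Fin d → Bool) → ℝ) : ℝ :=
  (∑ ω : Fin d → Bool, f ω) / 2 ^ d

/-- One step of the binomial Euler scheme: X̄ = x + σ_n(x) ξ √τ. -/
noncomputable def Xbar {d : ℕ} (S : (Fin d → ℝ) → Matrix (Fin d) (Fin d) ℝ)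
    (τ : ℝ) (x : Fin d → ℝ) (ω : Fin d → Bool) : Fin d → ℝ :=
  fun j => x j + Real.sqrt τ * (S x).mulVec (rwInc ω) j

/-- Z = (1/τ) E[φ(X̄) σ_n^{-T}(x) ξ √τ]. -/
noncomputable def Zvec {d : ℕ} (S Sinv : (Fin d → ℝ) → Matrix (Fin d) (Fin d) ℝ)
    (τ : ℝ) (x : Fin d → ℝ) (φ : (Fin d → ℝ) → ℝ) : Fin d → ℝ :=
  fun i => (1 / τ) *
    Emean (fun ω => φ (Xbar S τ x ω) * ((Sinv x).mulVec (rwInc ω) i * Real.sqrt τ))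

/-!
Put `ψ = φ₁ - φ₂ ≥ 0` and `D = E[ψ(X̄)]`. Since `H` is Lipschitz in `z` and `Z` is linear in `φ`,
it suffices to show `τ C_H |Z_ψ|₁ ≤ D + C' τ √τ`. There are two bounds on `Z_ψ`: positivity of `ψ`
gives `√τ |Z_ψ|₁ ≤ a D`, and since `E[σ⁻ᵀ ξ] = 0` one may replace `ψ(X̄)` by `ψ(X̄) - ψ(x) = O(√τ)`,
which gives `|Z_ψ|₁ ≤ K`. When `√τ C_H a ≤ 1` the first bound lets `D` absorb the term, otherwise
`τ ≤ τ √τ C_H a` and the second bound makes it `O(τ √τ)`.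
-/

open scoped BigOperators Matrix

lemma Emean_eq_expect {d : ℕ} (f : (Fin d → Bool) → ℝ) : Emean f = 𝔼 ω, f ω := by
  rw [Emean, Fintype.expect_eq_sum_div_card]
  simp

lemma Emean_sub {d : ℕ} (f g : (Fin d → Bool) → ℝ) :
    Emean (fun ω => f ω - g ω) = Emean f - Emean g := by
  simp only [Emean_eq_expect, expect_sub_distrib]

lemma Emean_le {d : ℕ} {f : (Fin d → Bool) → ℝ} {c : ℝ} (h : ∀ ω, f ω ≤ c) : Emean f ≤ c := by
  rw [Emean_eq_expect]
  exact expect_le univ_nonempty fun ω _ => h ω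

lemma Emean_nonneg {d : ℕ} {f : (Fin d → Bool) → ℝ} (h : ∀ ω, 0 ≤ f ω) : 0 ≤ Emean f := by
  rw [Emean_eq_expect]
  exact expect_nonneg fun ω _ => h ω

lemma sum_abs_Emean_mul_le {d : ℕ} {ι : Type*} [Fintype ι] (f : (Fin d → Bool) → ℝ)
    (w : (Fin d → Bool) → ι → ℝ) {c : ℝ} (hw : ∀ ω, ∑ i, |w ω i| ≤ c) :
    ∑ i, |Emean (fun ω => f ω * w ω i)| ≤ c * Emean (fun ω => |f ω|) := by
  simp only [Emean_eq_expect]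
  calc ∑ i, |𝔼 ω, f ω * w ω i| ≤ ∑ i, 𝔼 ω, |f ω| * |w ω i| := by
        gcongr with i
        simpa only [abs_mul] using abs_expect_le univ fun ω => f ω * w ω i
    _ = 𝔼 ω, |f ω| * ∑ i, |w ω i| := by simp only [mul_sum, expect_sum_comm]
    _ ≤ 𝔼 ω, |f ω| * c := expect_le_expect fun ω _ => by gcongr; exact hw ω
    _ = c * 𝔼 ω, |f ω| := by rw [← expect_mul, mul_comm]

lemma abs_rwInc {d : ℕ} (ω : Fin d → Bool) (k : Fin d) : |rwInc ω k| = 1 := by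
  by_cases h : ω k <;> simp [rwInc, h]

lemma rwInc_not {d : ℕ} (ω : Fin d → Bool) : rwInc (fun k => !ω k) = -rwInc ω := by
  funext k
  by_cases h : ω k <;> simp [rwInc, h]

lemma sum_rwInc (d : ℕ) : ∑ ω : Fin d → Bool, rwInc ω = 0 := by
  have hnot : Function.Involutive fun ω : Fin d → Bool => fun k => !ω k :=
    fun ω => funext fun k => Bool.not_not (ω k)
  refine self_eq_neg.mp ?_
  rw [← sum_neg_distrib]
  exact Fintype.sum_bijective _ hnot.bijective _ _ fun ω => by rw [rwInc_not, neg_neg]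

lemma Emean_mulVec_rwInc {d m : ℕ} (A : Matrix (Fin m) (Fin d) ℝ) (i : Fin m) :
    Emean (fun ω => (A *ᵥ rwInc ω) i) = 0 := by
  rw [Emean, ← Finset.sum_apply, ← Matrix.mulVec_sum, sum_rwInc, Matrix.mulVec_zero, Pi.zero_apply,
    zero_div]

lemma sum_abs_mulVec_rwInc_le {d m : ℕ} {A : Matrix (Fin m) (Fin d) ℝ} {c : ℝ}
    (hA : ∀ v, ∑ i, |(A *ᵥ v) i| ≤ c * ∑ i, |v i|) (ω : Fin d → Bool) :
    ∑ i, |(A *ᵥ rwInc ω) i| ≤ |c| * d := by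
  have h := hA (rwInc ω)
  simp only [abs_rwInc, sum_const, card_univ, Fintype.card_fin, nsmul_eq_mul, mul_one] at h
  exact h.trans (mul_le_mul_of_nonneg_right (le_abs_self c) d.cast_nonneg)

lemma Emean_sub_const_mul_mulVec_rwInc {d m : ℕ} (f : (Fin d → Bool) → ℝ) (c : ℝ)
    (A : Matrix (Fin m) (Fin d) ℝ) (i : Fin m) :
    Emean (fun ω => (f ω - c) * (A *ᵥ rwInc ω) i) = Emean (fun ω => f ω * (A *ᵥ rwInc ω) i) := by
  have h := Emean_mulVec_rwInc A i
  simp only [Emean_eq_expect, sub_mul, expect_sub_distrib, ← mul_expect] at h ⊢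
  rw [h, mul_zero, sub_zero]

lemma abs_sub_sub_sub_le_of_lipschitz {n : ℕ} {φ₁ φ₂ : (Fin n → ℝ) → ℝ} {L : ℝ}
    (h₁ : ∀ y z : Fin n → ℝ, |φ₁ y - φ₁ z| ≤ L * ∑ i, |y i - z i|)
    (h₂ : ∀ y z : Fin n → ℝ, |φ₂ y - φ₂ z| ≤ L * ∑ i, |y i - z i|) (y z : Fin n → ℝ) :
    |(φ₁ y - φ₂ y) - (φ₁ z - φ₂ z)| ≤ 2 * |L| * ∑ i, |y i - z i| := by
  have hL : L * ∑ i, |y i - z i| ≤ |L| * ∑ i, |y i - z i| :=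
    mul_le_mul_of_nonneg_right (le_abs_self L) (sum_nonneg fun i _ => abs_nonneg _)
  calc |(φ₁ y - φ₂ y) - (φ₁ z - φ₂ z)| = |(φ₁ y - φ₁ z) - (φ₂ y - φ₂ z)| := by ring_nf
    _ ≤ |φ₁ y - φ₁ z| + |φ₂ y - φ₂ z| := abs_sub _ _
    _ ≤ 2 * |L| * ∑ i, |y i - z i| := by linarith [h₁ y z, h₂ y z]

section Scheme

variable {d : ℕ} (S Sinv : (Fin d → ℝ) → Matrix (Fin d) (Fin d) ℝ) {τ : ℝ} (x : Fin d → ℝ)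

lemma Zvec_sub (φ₁ φ₂ : (Fin d → ℝ) → ℝ) :
    Zvec S Sinv τ x φ₁ - Zvec S Sinv τ x φ₂ = Zvec S Sinv τ x (fun y => φ₁ y - φ₂ y) := by
  funext i
  simp only [Zvec, Pi.sub_apply, ← mul_sub, ← Emean_sub, sub_mul]

lemma sqrt_mul_Zvec (hτ : 0 < τ) (φ : (Fin d → ℝ) → ℝ) (i : Fin d) :
    √τ * Zvec S Sinv τ x φ i = Emean (fun ω => φ (Xbar S τ x ω) * (Sinv x *ᵥ rwInc ω) i) := by
  have h : Emean (fun ω => φ (Xbar S τ x ω) * ((Sinv x *ᵥ rwInc ω) i * √τ))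
      = Emean (fun ω => φ (Xbar S τ x ω) * (Sinv x *ᵥ rwInc ω) i) * √τ := by
    simp only [Emean_eq_expect, expect_mul, mul_assoc]
  rw [Zvec, h]
  field_simp
  rw [Real.sq_sqrt hτ.le]

lemma sqrt_mul_sum_abs_Zvec_le (hτ : 0 < τ) (φ : (Fin d → ℝ) → ℝ) (c : ℝ) {a : ℝ}
    (ha : ∀ ω, ∑ i, |(Sinv x *ᵥ rwInc ω) i| ≤ a) :
    √τ * ∑ i, |Zvec S Sinv τ x φ i| ≤ a * Emean (fun ω => |φ (Xbar S τ x ω) - c|) :=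
  calc √τ * ∑ i, |Zvec S Sinv τ x φ i|
      = ∑ i, |Emean (fun ω => (φ (Xbar S τ x ω) - c) * (Sinv x *ᵥ rwInc ω) i)| := by
        rw [mul_sum]
        refine sum_congr rfl fun i _ => ?_
        rw [Emean_sub_const_mul_mulVec_rwInc, ← sqrt_mul_Zvec S Sinv x hτ, abs_mul,
          abs_of_pos (Real.sqrt_pos.2 hτ)]
    _ ≤ a * Emean (fun ω => |φ (Xbar S τ x ω) - c|) :=
        sum_abs_Emean_mul_le _ (fun ω i => (Sinv x *ᵥ rwInc ω) i) ha

lemma sum_abs_Xbar_sub_le {b : ℝ} (hb : ∀ ω, ∑ j, |(S x *ᵥ rwInc ω) j| ≤ b)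
    (ω : Fin d → Bool) : ∑ j, |Xbar S τ x ω j - x j| ≤ √τ * b := by
  simp only [Xbar, add_sub_cancel_left, abs_mul, abs_of_nonneg (Real.sqrt_nonneg τ), ← mul_sum]
  exact mul_le_mul_of_nonneg_left (hb ω) (Real.sqrt_nonneg τ)

lemma sum_abs_Zvec_le_of_lipschitz (hτ : 0 < τ) {φ : (Fin d → ℝ) → ℝ} {L a b : ℝ} (hL : 0 ≤ L)
    (hφ : ∀ y z : Fin d → ℝ, |φ y - φ z| ≤ L * ∑ i, |y i - z i|)
    (ha : ∀ ω, ∑ i, |(Sinv x *ᵥ rwInc ω) i| ≤ a) (hb : ∀ ω, ∑ j, |(S x *ᵥ rwInc ω) j| ≤ b) :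
    ∑ i, |Zvec S Sinv τ x φ i| ≤ a * (L * b) := by
  have ha₀ : 0 ≤ a := (sum_nonneg fun i _ => abs_nonneg _).trans (ha default)
  have hE : Emean (fun ω => |φ (Xbar S τ x ω) - φ x|) ≤ √τ * (L * b) := Emean_le fun ω =>
    calc |φ (Xbar S τ x ω) - φ x| ≤ L * (√τ * b) :=
          (hφ _ _).trans (mul_le_mul_of_nonneg_left (sum_abs_Xbar_sub_le S x hb ω) hL)
      _ = √τ * (L * b) := by ring
  refine le_of_mul_le_mul_left ?_ (Real.sqrt_pos.2 hτ)
  calc √τ * ∑ i, |Zvec S Sinv τ x φ i| ≤ a * (√τ * (L * b)) :=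
        (sqrt_mul_sum_abs_Zvec_le S Sinv x hτ φ (φ x) ha).trans (mul_le_mul_of_nonneg_left hE ha₀)
    _ = √τ * (a * (L * b)) := by ring

end Scheme

lemma mul_mul_le_add_of_le_of_sqrt_mul_le {τ c y D a K : ℝ} (hτ : 0 ≤ τ) (hc : 0 ≤ c)
    (ha : 0 ≤ a) (hD : 0 ≤ D) (hy : 0 ≤ y) (hyK : y ≤ K) (hyD : √τ * y ≤ a * D) :
    τ * c * y ≤ D + c ^ 2 * a * K * (τ * √τ) := by
  have hss : √τ * √τ = τ := Real.mul_self_sqrt hτ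
  have hK : 0 ≤ K := hy.trans hyK
  rcases le_or_gt (√τ * c * a) 1 with h | h
  · have hrest : 0 ≤ c ^ 2 * a * K * (τ * √τ) := by positivity
    calc τ * c * y = √τ * c * (√τ * y) := by linear_combination (-(c * y)) * hss
      _ ≤ √τ * c * (a * D) := by gcongr
      _ = (√τ * c * a) * D := by ring
      _ ≤ 1 * D := by gcongr
      _ ≤ D + c ^ 2 * a * K * (τ * √τ) := by linarith
  · calc τ * c * y ≤ τ * c * K := by gcongr
      _ ≤ τ * c * K * (√τ * c * a) := le_mul_of_one_le_right (by positivity) h.le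
      _ = c ^ 2 * a * K * (τ * √τ) := by ring
      _ ≤ D + c ^ 2 * a * K * (τ * √τ) := le_add_of_nonneg_left hD

theorem scheme_monotonicity_general {d I : ℕ}
    (H : ℝ → (Fin d → ℝ) → (Fin d → ℝ) → (Fin I → ℝ) → ℝ)
    (CH C0 Lφ CS CSinv : ℝ)
    (hH : ∀ t x z z' p, |H t x z p - H t x z' p| ≤ CH * ∑ i, |z i - z' i|)
    (S Sinv : (Fin d → ℝ) → Matrix (Fin d) (Fin d) ℝ)
    (hS : ∀ x v, ∑ i, |(S x).mulVec v i| ≤ CS * ∑ i, |v i|)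
    (hSinv : ∀ x v, ∑ i, |(Sinv x).mulVec v i| ≤ CSinv * ∑ i, |v i|)
    (φ1 φ2 : (Fin d → ℝ) → ℝ)
    (hLip1 : ∀ y z : Fin d → ℝ, |φ1 y - φ1 z| ≤ Lφ * ∑ i, |y i - z i|)
    (hLip2 : ∀ y z : Fin d → ℝ, |φ2 y - φ2 z| ≤ Lφ * ∑ i, |y i - z i|)
    (hdiff : ∀ y, 0 ≤ φ1 y - φ2 y ∧ φ1 y - φ2 y ≤ C0) :
    ∃ C' > 0, ∀ τ : ℝ, 0 < τ → ∀ tn : ℝ, ∀ x : Fin d → ℝ, ∀ p ∈ stdSimplex ℝ (Fin I),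
      Emean (fun ω => φ1 (Xbar S τ x ω)) + τ * H tn x (Zvec S Sinv τ x φ1) p
        ≥ Emean (fun ω => φ2 (Xbar S τ x ω)) + τ * H tn x (Zvec S Sinv τ x φ2) p
          - C' * τ * Real.sqrt τ := by
  set a := |CSinv| * d
  set K := a * (2 * |Lφ| * (|CS| * d))
  refine ⟨|CH| ^ 2 * a * K + 1, by positivity, fun τ hτ tn x p _ => ?_⟩
  have ha := sum_abs_mulVec_rwInc_le (hSinv x)
  have hb := sum_abs_mulVec_rwInc_le (hS x)
  set ψ : (Fin d → ℝ) → ℝ := fun y => φ1 y - φ2 y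
  have hyK : ∑ i, |Zvec S Sinv τ x ψ i| ≤ K := sum_abs_Zvec_le_of_lipschitz S Sinv x hτ
    (by positivity) (abs_sub_sub_sub_le_of_lipschitz hLip1 hLip2) ha hb
  have hyD : √τ * ∑ i, |Zvec S Sinv τ x ψ i| ≤ a * Emean (fun ω => ψ (Xbar S τ x ω)) := by
    have hψ : ∀ y, |ψ y - 0| = ψ y := fun y => by rw [sub_zero, abs_of_nonneg (hdiff y).1]
    simpa only [hψ] using sqrt_mul_sum_abs_Zvec_le S Sinv x hτ ψ 0 ha
  have hHy : H tn x (Zvec S Sinv τ x φ2) p - H tn x (Zvec S Sinv τ x φ1) p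
      ≤ |CH| * ∑ i, |Zvec S Sinv τ x ψ i| := by
    calc _ ≤ CH * ∑ i, |Zvec S Sinv τ x φ2 i - Zvec S Sinv τ x φ1 i| :=
          (le_abs_self _).trans (hH tn x _ _ p)
      _ = CH * ∑ i, |Zvec S Sinv τ x ψ i| := by
          rw [← Zvec_sub]
          exact congrArg _ (sum_congr rfl fun i _ => abs_sub_comm _ _)
      _ ≤ |CH| * ∑ i, |Zvec S Sinv τ x ψ i| :=
          mul_le_mul_of_nonneg_right (le_abs_self CH) (sum_nonneg fun i _ => abs_nonneg _)
  have hτy := mul_mul_le_add_of_le_of_sqrt_mul_le hτ.le (abs_nonneg CH) (by positivity)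
    (Emean_nonneg fun ω => (hdiff _).1) (sum_nonneg fun i _ => abs_nonneg _) hyK hyD
  have hE : Emean (fun ω => ψ (Xbar S τ x ω))
      = Emean (fun ω => φ1 (Xbar S τ x ω)) - Emean (fun ω => φ2 (Xbar S τ x ω)) := Emean_sub _ _
  have hτs : 0 ≤ τ * √τ := by positivity
  linarith [mul_le_mul_of_nonneg_left hHy hτ.le]

/-- monotonicity of the one-step scheme: if 0 ≤ φ₁ - φ₂ ≤ C₀ then the
one-step values are ordered up to an error C' τ √τ, with C' depending only on the data. -/
theorem scheme_monotonicity {d I : ℕ}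
    (H : ℝ → (Fin d → ℝ) → (Fin d → ℝ) → (Fin I → ℝ) → ℝ)
    (CH C0 Lφ CS CSinv : ℝ) (hCH : 0 < CH) (hC0 : 0 < C0)
    (hH : ∀ t x z z' p, |H t x z p - H t x z' p| ≤ CH * ∑ i, |z i - z' i|)
    (S Sinv : (Fin d → ℝ) → Matrix (Fin d) (Fin d) ℝ)
    (hS : ∀ x v, ∑ i, |(S x).mulVec v i| ≤ CS * ∑ i, |v i|)
    (hSinv : ∀ x v, ∑ i, |(Sinv x).mulVec v i| ≤ CSinv * ∑ i, |v i|)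
    (φ1 φ2 : (Fin d → ℝ) → ℝ)
    (hLip1 : ∀ y z : Fin d → ℝ, |φ1 y - φ1 z| ≤ Lφ * ∑ i, |y i - z i|)
    (hLip2 : ∀ y z : Fin d → ℝ, |φ2 y - φ2 z| ≤ Lφ * ∑ i, |y i - z i|)
    (hdiff : ∀ y, 0 ≤ φ1 y - φ2 y ∧ φ1 y - φ2 y ≤ C0) :
    ∃ C' > 0, ∀ τ : ℝ, 0 < τ → ∀ tn : ℝ, ∀ x : Fin d → ℝ, ∀ p ∈ stdSimplex ℝ (Fin I),
      Emean (fun ω => φ1 (Xbar S τ x ω)) + τ * H tn x (Zvec S Sinv τ x φ1) p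
        ≥ Emean (fun ω => φ2 (Xbar S τ x ω)) + τ * H tn x (Zvec S Sinv τ x φ2) p
          - C' * τ * Real.sqrt τ :=
  scheme_monotonicity_general H CH C0 Lφ CS CSinv hH S Sinv hS hSinv φ1 φ2 hLip1 hLip2 hdiff
end
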